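/- Let K₂ > 0, ε > 0, λ > 0 with 4K₂ − 2λ − 4λε > 0, and let μ > max{λ/2, (K₂² − 2ελ²)/(4K₂ − 2λ − 4λε)}. Then the symmetric 2×2 real matrix 𝒟₁ = [[λ/2 − μ, μ − K₂/2], [μ − K₂/2, λε − μ]] is negative definite. -/
import Mathlib


open Matrix

/-- The matrix 𝒟₁ = [[λ/2 − μ, μ − K₂/2], [μ − K₂/2, λε − μ]] is negative definite,
i.e. xᵀ 𝒟₁ x < 0 for all nonzero x ∈ ℝ². -/
theorem stmt_13 (K₂ ε lam μ : ℝ) (hK₂ : 0 < K₂) (hε : 0 < ε) (hlam : 0 < lam)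
    (hden : 0 < 4 * K₂ - 2 * lam - 4 * lam * ε)
    (hμ : max (lam / 2) ((K₂ ^ 2 - 2 * ε * lam ^ 2) / (4 * K₂ - 2 * lam - 4 * lam * ε)) < μ) :
    ∀ x : Fin 2 → ℝ, x ≠ 0 →
      x ⬝ᵥ ((!![lam / 2 - μ, μ - K₂ / 2; μ - K₂ / 2, lam * ε - μ]) *ᵥ x) < 0 := by
  have hμ1 : lam / 2 < μ := lt_of_le_of_lt (le_max_left _ _) hμ
  have hμ2 : (K₂ ^ 2 - 2 * ε * lam ^ 2) / (4 * K₂ - 2 * lam - 4 * lam * ε) < μ :=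
    lt_of_le_of_lt (le_max_right _ _) hμ
  have hμ3 : K₂ ^ 2 - 2 * ε * lam ^ 2 < μ * (4 * K₂ - 2 * lam - 4 * lam * ε) := by
    have := (div_lt_iff₀ hden).mp hμ2
    linarith
  have hdet : 0 < (lam / 2 - μ) * (lam * ε - μ) - (μ - K₂ / 2) ^ 2 := by nlinarith
  have ha : lam / 2 - μ < 0 := by linarith
  intro x hx
  have h01 : x 0 ≠ 0 ∨ x 1 ≠ 0 := by
    by_contra h
    push_neg at h
    apply hx
    funext i
    fin_cases i <;> simp [h.1, h.2]
  simp only [Matrix.mulVec, dotProduct, Fin.sum_univ_two, Matrix.cons_val_zero,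
    Matrix.cons_val_one, Matrix.head_cons, Matrix.cons_val', Matrix.head_fin_const,
    Matrix.empty_val', Matrix.cons_val_fin_one, Matrix.of_apply]
  rcases mul_pos_iff.mp
      (show 0 < (lam / 2 - μ) *
        (x 0 * ((lam / 2 - μ) * x 0 + (μ - K₂ / 2) * x 1) +
         x 1 * ((μ - K₂ / 2) * x 0 + (lam * ε - μ) * x 1)) by
        by_cases h1 : x 1 = 0
        · have h0 : x 0 ≠ 0 := by tauto
          have hp : 0 < x 0 ^ 2 := by positivity
          rw [h1]
          nlinarith [mul_pos (mul_pos (neg_pos.mpr ha) (neg_pos.mpr ha)) hp]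
        · have hp : 0 < x 1 ^ 2 := by positivity
          nlinarith [sq_nonneg ((lam / 2 - μ) * x 0 + (μ - K₂ / 2) * x 1), mul_pos hdet hp])
    with ⟨h1, h2⟩ | ⟨h1, h2⟩
  · linarith
  · exact h2
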